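/- arXiv:math/0511419 — 2 statements merged into one kernel-verified Lean document; each statement's English description precedes it below -/
import Mathlib

section
/- For n ≥ 2, a_k(n) = (1/2)(g_{k-1}(n) + g_k(n)), where g_k(n) is the number of permutations of {1,...,n} with exactly k alternating runs. -/
/-- The list of values of a permutation of `Fin n` (0-indexed; relative order
is what matters). -/
def permList (n : ℕ) (w : Equiv.Perm (Fin n)) : List ℕ :=
  List.ofFn (fun i => (w i : ℕ))

/-- A list is alternating: `a > b < c > d < ⋯` (descents in even positions). -/
def IsAlt (l : List ℕ) : Prop :=
  ∀ i : ℕ, ∀ hi : i + 1 < l.length,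
    if i % 2 = 0 then l.get ⟨i + 1, hi⟩ < l.get ⟨i, Nat.lt_of_succ_lt hi⟩
    else l.get ⟨i, Nat.lt_of_succ_lt hi⟩ < l.get ⟨i + 1, hi⟩

/-- `asLen n w` : the maximum length of an alternating subsequence of `w`. -/
noncomputable def asLen (n : ℕ) (w : Equiv.Perm (Fin n)) : ℕ :=
  sSup {k | ∃ l : List ℕ, l.Sublist (permList n w) ∧ IsAlt l ∧ l.length = k}

/-- `aCount n k = #{w ∈ S_n : as(w) = k}`. -/
noncomputable def aCount (n k : ℕ) : ℕ :=
  Nat.card {w : Equiv.Perm (Fin n) // asLen n w = k}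

/-- `bCount n k = #{w ∈ S_n : as(w) ≤ k}`. -/
noncomputable def bCount (n k : ℕ) : ℕ :=
  Nat.card {w : Equiv.Perm (Fin n) // asLen n w ≤ k}

/-- The number of alternating runs (maximal monotone consecutive blocks) of `w`:
for `n ≥ 2` it is `1 +` the number of interior turning points. -/
def runCount (n : ℕ) (w : Equiv.Perm (Fin n)) : ℕ :=
  let l := permList n w
  if n ≤ 1 then n
  else 1 + ((Finset.range (n - 2)).filter (fun i =>
    (l[i]! < l[i+1]! ∧ l[i+2]! < l[i+1]!) ∨
    (l[i+1]! < l[i]! ∧ l[i+1]! < l[i+2]!))).card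

/-- `gCount n k = #{w ∈ S_n : w has exactly k alternating runs}`. -/
noncomputable def gCount (n k : ℕ) : ℕ :=
  Nat.card {w : Equiv.Perm (Fin n) // runCount n w = k}

/-!
Write `l` for the list of values of `w`. A longest zigzag subsequence of `l` whose first step goes
in direction `d` can be found greedily; call its length `altLen d l`. If the first step of `l`
itself goes in direction `d`, then `altLen (¬d) l` is one more than the number of turning points,
i.e. the number of runs, and `altLen d l = altLen (¬d) l + 1`. Since `as(w)` counts subsequences
starting with a descent, `as(w) = runs(w)` when `w` starts with an ascent and
`as(w) = runs(w) + 1` otherwise. Complementation `w ↦ n + 1 - w` preserves runs and exchanges the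
two cases, so exactly half of the permutations with `j` runs start with an ascent, whence
`a_k = g_k / 2 + g_{k-1} / 2`.
-/

section Zigzag

variable {α : Type*} [LinearOrder α]

def DirLt (up : Bool) (a b : α) : Prop := if up then a < b else b < a

instance (up : Bool) (a b : α) : Decidable (DirLt up a b) :=
  inferInstanceAs (Decidable (if up then a < b else b < a))

@[simp] lemma dirLt_true {a b : α} : DirLt true a b ↔ a < b := Iff.rfl

@[simp] lemma dirLt_false {a b : α} : DirLt false a b ↔ b < a := Iff.rfl

lemma DirLt.not_dirLt_not {up : Bool} {a b : α} (h : DirLt up a b) : ¬DirLt (!up) a b := by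
  cases up <;> simp_all [lt_asymm]

lemma dirLt_not_of_not {up : Bool} {a b : α} (hab : a ≠ b) (h : ¬DirLt up a b) :
    DirLt (!up) a b := by
  cases up <;> simp_all <;> order

def Zigzag : Bool → List α → Prop
  | _, [] => True
  | _, [_] => True
  | up, a :: b :: t => DirLt up a b ∧ Zigzag (!up) (b :: t)

/-- The greedy computation of the length of a longest `Zigzag up` sublist. -/
def altLen : Bool → List α → ℕ
  | _, [] => 0
  | _, [_] => 1
  | up, a :: b :: t => if DirLt up a b then altLen (!up) (b :: t) + 1 else altLen up (b :: t)

lemma altLen_le_altLen_not_add_one : ∀ (up : Bool) (l : List α), altLen up l ≤ altLen (!up) l + 1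
  | _, [] | _, [_] => by simp [altLen]
  | up, a :: b :: t => by
    have := altLen_le_altLen_not_add_one up (b :: t)
    by_cases h : DirLt up a b
    · simp [altLen, h, h.not_dirLt_not]
    · by_cases h' : DirLt (!up) a b <;> simp [altLen, h, h'] <;> omega

lemma altLen_cons_cons_of_dirLt {up : Bool} {a b : α} (t : List α) (h : DirLt up a b) :
    altLen up (a :: b :: t) = altLen (!up) (a :: b :: t) + 1 := by
  simp [altLen, h, h.not_dirLt_not]

lemma altLen_le_altLen_cons (up : Bool) (a : α) : ∀ t : List α, altLen up t ≤ altLen up (a :: t)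
  | [] => by simp [altLen]
  | b :: t => by
    have := altLen_le_altLen_not_add_one up (b :: t)
    by_cases h : DirLt up a b <;> simp [altLen, h]
    omega

lemma one_le_altLen_cons (up : Bool) (a : α) : ∀ t : List α, 1 ≤ altLen up (a :: t)
  | [] => by simp [altLen]
  | b :: t => by
    by_cases h : DirLt up a b <;> simp [altLen, h]
    exact one_le_altLen_cons up b t

theorem length_le_altLen {up : Bool} {s l : List α} (hs : s.Sublist l) (hz : Zigzag up s) :
    s.length ≤ altLen up l := by
  induction l generalizing s up with
  | nil => simp [List.sublist_nil.mp hs]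
  | cons a t ih =>
    cases hs with
    | cons _ hs => exact (ih hs hz).trans (altLen_le_altLen_cons up a t)
    | @cons_cons r _ _ hs =>
      rcases r with _ | ⟨x, r⟩
      · exact one_le_altLen_cons up a t
      rcases t with _ | ⟨b, t⟩
      · exact absurd (List.sublist_nil.mp hs) (by simp)
      obtain ⟨hax, hz⟩ := hz
      by_cases hab : DirLt up a b
      · simpa [altLen, hab] using ih hs hz
      -- `b` is a better start than `a`: the sublist `b :: x :: r` is still zigzag.
      have hbx : DirLt up b x := by cases up <;> simp_all <;> order
      have hs' : (b :: x :: r).Sublist (b :: t) := by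
        cases hs with
        | cons _ hs => exact hs.cons_cons b
        | cons_cons => simp_all
      simpa [altLen, hab] using ih hs' ⟨hbx, hz⟩

/-- The conjunct `¬DirLt up a x` is the invariant that lets the greedy witness be extended to the
left. -/
theorem exists_zigzag_sublist_cons (up : Bool) (a : α) (t : List α) :
    ∃ x s, (x :: s).Sublist (a :: t) ∧ Zigzag up (x :: s) ∧ s.length + 1 = altLen up (a :: t) ∧
      ¬DirLt up a x := by
  induction t generalizing up a with
  | nil => exact ⟨a, [], by simp, trivial, by simp [altLen], by cases up <;> simp⟩
  | cons b t ih =>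
    by_cases hab : DirLt up a b
    · obtain ⟨x, s, hs, hz, hlen, hbx⟩ := ih (!up) b
      have hax : DirLt up a x := by cases up <;> simp_all <;> order
      exact ⟨a, x :: s, hs.cons_cons a, ⟨hax, hz⟩, by simp [altLen, hab, ← hlen],
        by cases up <;> simp⟩
    · obtain ⟨x, s, hs, hz, hlen, hbx⟩ := ih up b
      have hax : ¬DirLt up a x := by cases up <;> simp_all <;> order
      exact ⟨x, s, hs.cons a, hz, by simp [altLen, hab, hlen], hax⟩

theorem exists_zigzag_sublist (up : Bool) :
    ∀ l : List α, ∃ s, s.Sublist l ∧ Zigzag up s ∧ s.length = altLen up l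
  | [] => ⟨[], by simp, trivial, by simp [altLen]⟩
  | a :: t =>
    have ⟨x, s, hs, hz, hlen, _⟩ := exists_zigzag_sublist_cons up a t
    ⟨x :: s, hs, hz, hlen⟩

theorem zigzag_iff_forall_getElem {up : Bool} {l : List α} :
    Zigzag up l ↔ ∀ i (hi : i + 1 < l.length),
      DirLt (if i % 2 = 0 then up else !up) l[i] l[i + 1] := by
  induction l generalizing up with
  | nil => simp [Zigzag]
  | cons a t ih =>
    match t with
    | [] => simp [Zigzag]
    | b :: t =>
      have parity (i : ℕ) :
          (if (i + 1) % 2 = 0 then up else !up) = if i % 2 = 0 then !up else up := by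
        rcases Nat.mod_two_eq_zero_or_one i with h | h <;> simp [h, Nat.add_mod]
      simp only [Zigzag, ih, Bool.not_not, List.length_cons]
      constructor
      · rintro ⟨hab, h⟩ (_ | i) hi
        · simpa using hab
        · have := h i (by omega)
          rwa [← parity] at this
      · intro h
        refine ⟨by simpa using h 0 (by simp), fun i hi => ?_⟩
        have := h (i + 1) (by omega)
        rwa [parity] at this

def IsTurn (a b c : α) : Prop := (a < b ∧ c < b) ∨ (b < a ∧ b < c)

instance (a b c : α) : Decidable (IsTurn a b c) :=
  inferInstanceAs (Decidable ((a < b ∧ c < b) ∨ (b < a ∧ b < c)))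

def turnCount : List α → ℕ
  | a :: b :: c :: t => (if IsTurn a b c then 1 else 0) + turnCount (b :: c :: t)
  | _ => 0

lemma isTurn_iff_dirLt_not {up : Bool} {a b : α} (c : α) (h : DirLt up a b) :
    IsTurn a b c ↔ DirLt (!up) b c := by
  cases up <;> simp only [dirLt_true, dirLt_false, Bool.not_true, Bool.not_false] at * <;>
    grind [IsTurn]

theorem altLen_not_eq_turnCount_add_one {up : Bool} {a b : α} {t : List α}
    (hc : (a :: b :: t).IsChain (· ≠ ·)) (h : DirLt up a b) :
    altLen (!up) (a :: b :: t) = turnCount (a :: b :: t) + 1 := by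
  induction t generalizing up a b with
  | nil => simp [altLen, turnCount, h.not_dirLt_not]
  | cons c t ih =>
    have hbc : b ≠ c := (List.isChain_cons_cons.mp hc.tail).1
    rw [altLen, if_neg h.not_dirLt_not, turnCount]
    by_cases hbc' : DirLt up b c
    · rw [ih hc.tail hbc', if_neg (by rw [isTurn_iff_dirLt_not c h]; exact hbc'.not_dirLt_not)]
      omega
    · have h' := dirLt_not_of_not hbc hbc'
      rw [altLen_cons_cons_of_dirLt t h', ih hc.tail h',
        if_pos ((isTurn_iff_dirLt_not c h).mpr h')]
      omega

lemma isTurn_comp_iff_of_strictAntiOn {β : Type*} [LinearOrder β] {f : α → β} {s : Set α}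
    (hf : StrictAntiOn f s) {a b c : α} (ha : a ∈ s) (hb : b ∈ s) (hc : c ∈ s) :
    IsTurn (f a) (f b) (f c) ↔ IsTurn a b c := by
  simp only [IsTurn, hf.lt_iff_gt ha hb, hf.lt_iff_gt hb ha, hf.lt_iff_gt hc hb,
    hf.lt_iff_gt hb hc]
  tauto

theorem turnCount_map_of_strictAntiOn {β : Type*} [LinearOrder β] {f : α → β} {s : Set α}
    (hf : StrictAntiOn f s) : ∀ {l : List α}, (∀ x ∈ l, x ∈ s) → turnCount (l.map f) = turnCount l
  | a :: b :: c :: t, hl => by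
    have ih := turnCount_map_of_strictAntiOn hf (l := b :: c :: t) fun x hx => hl x (by simp_all)
    simp only [List.map_cons, turnCount] at ih ⊢
    simp only [isTurn_comp_iff_of_strictAntiOn hf (hl a (by simp)) (hl b (by simp))
      (hl c (by simp)), ih]
  | [], _ | [_], _ | [_, _], _ => rfl

lemma card_filter_isTurn [Inhabited α] (l : List α) :
    ((Finset.range (l.length - 2)).filter fun i => IsTurn l[i]! l[i + 1]! l[i + 2]!).card =
      turnCount l := by
  match l with
  | [] | [_] | [_, _] => rfl
  | a :: b :: c :: t =>
    have ih := card_filter_isTurn (b :: c :: t)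
    have hlen : t.length + 3 - 2 = (t.length + 2 - 2) + 1 := by omega
    rw [Finset.card_filter] at ih ⊢
    simp only [List.length_cons] at ih ⊢
    rw [hlen, Finset.sum_range_succ', turnCount, ← ih, add_comm]
    simp

end Zigzag

theorem two_mul_card_eq_card_add_card {X : Type*} [Finite X] (σ : X ≃ X) (p : X → Prop)
    (r a : X → ℕ) (hp : ∀ x, p (σ x) ↔ ¬p x) (hr : ∀ x, r (σ x) = r x)
    (ha : ∀ x, p x → a x = r x) (ha' : ∀ x, ¬p x → a x = r x + 1) {k : ℕ} (hk : 1 ≤ k) :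
    2 * Nat.card {x // a x = k} = Nat.card {x // r x = k - 1} + Nat.card {x // r x = k} := by
  classical
  have := Fintype.ofFinite X
  have split (q : X → Prop) :
      Nat.card {x // q x} = Nat.card {x // q x ∧ p x} + Nat.card {x // q x ∧ ¬p x} := by
    simp only [Nat.card_eq_fintype_card, Fintype.card_subtype, ← Finset.filter_filter]
    exact (Finset.card_filter_add_card_filter_not _).symm
  have swap (j : ℕ) : Nat.card {x // r x = j ∧ ¬p x} = Nat.card {x // r x = j ∧ p x} :=
    Nat.card_congr (σ.subtypeEquiv fun x => by rw [hr, hp])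
  have hak : Nat.card {x // a x = k} =
      Nat.card {x // r x = k ∧ p x} + Nat.card {x // r x = k - 1 ∧ ¬p x} := by
    rw [split]
    congr 1 <;> refine Nat.card_congr (Equiv.subtypeEquivRight fun x => ?_)
    · by_cases hx : p x <;> simp [hx, ha]
    · by_cases hx : p x <;> simp [hx, ha']
      omega
  rw [hak, split (r · = k - 1), split (r · = k), swap, swap]
  ring

lemma isAlt_iff_zigzag (l : List ℕ) : IsAlt l ↔ Zigzag false l := by
  rw [zigzag_iff_forall_getElem, IsAlt]
  refine forall₂_congr fun i hi => ?_
  split_ifs <;> simp [List.get_eq_getElem]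

section Perm

variable {n : ℕ} (w : Equiv.Perm (Fin n))

lemma isChain_permList : (permList n w).IsChain (· ≠ ·) :=
  (List.nodup_ofFn.mpr (Fin.val_injective.comp w.injective)).isChain

theorem asLen_eq_altLen : asLen n w = altLen false (permList n w) := by
  refine IsGreatest.csSup_eq ⟨?_, ?_⟩
  · obtain ⟨s, hs, hz, hlen⟩ := exists_zigzag_sublist false (permList n w)
    exact ⟨s, hs, (isAlt_iff_zigzag s).mpr hz, hlen⟩
  · rintro _ ⟨s, hs, halt, rfl⟩
    exact length_le_altLen hs ((isAlt_iff_zigzag s).mp halt)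

theorem runCount_eq_turnCount_add_one (hn : 2 ≤ n) :
    runCount n w = turnCount (permList n w) + 1 := by
  have hlen : (permList n w).length = n := List.length_ofFn
  rw [runCount, if_neg (by omega), ← card_filter_isTurn, hlen, add_comm]
  rfl

lemma permList_trans_revPerm :
    permList n (w.trans Fin.revPerm) = (permList n w).map (fun x => n - 1 - x) := by
  simp only [permList, List.map_ofFn]
  congr 1
  funext i
  simp [Fin.val_rev]
  omega

theorem runCount_trans_revPerm (hn : 2 ≤ n) : runCount n (w.trans Fin.revPerm) = runCount n w := by
  have hanti : StrictAntiOn (fun x => n - 1 - x) (Set.Iio n) := by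
    intro a ha b hb hab
    simp only [Set.mem_Iio] at ha hb ⊢
    omega
  rw [runCount_eq_turnCount_add_one _ hn, runCount_eq_turnCount_add_one _ hn,
    permList_trans_revPerm, turnCount_map_of_strictAntiOn hanti]
  simp [permList]

end Perm

section PermAddTwo

variable {m : ℕ} (w : Equiv.Perm (Fin (m + 2)))

lemma exists_permList_eq_cons_cons : ∃ t, permList (m + 2) w = (w 0 : ℕ) :: (w 1 : ℕ) :: t :=
  ⟨_, by rw [permList, List.ofFn_succ, List.ofFn_succ]; rfl⟩

theorem asLen_eq_runCount_of_lt (h : w 0 < w 1) : asLen (m + 2) w = runCount (m + 2) w := by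
  obtain ⟨t, ht⟩ := exists_permList_eq_cons_cons w
  have hc := isChain_permList w
  rw [ht] at hc
  rw [asLen_eq_altLen, runCount_eq_turnCount_add_one _ (by omega), ht]
  exact altLen_not_eq_turnCount_add_one (up := true) hc h

theorem asLen_eq_runCount_add_one_of_not_lt (h : ¬w 0 < w 1) :
    asLen (m + 2) w = runCount (m + 2) w + 1 := by
  obtain ⟨t, ht⟩ := exists_permList_eq_cons_cons w
  have hc := isChain_permList w
  rw [ht] at hc
  have hdesc : DirLt false (w 0 : ℕ) (w 1 : ℕ) :=
    lt_of_le_of_ne (not_lt.mp h) (Fin.val_injective.ne (w.injective.ne (by simp)).symm)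
  rw [asLen_eq_altLen, runCount_eq_turnCount_add_one _ (by omega), ht,
    altLen_cons_cons_of_dirLt t hdesc, altLen_not_eq_turnCount_add_one hc hdesc]

lemma trans_revPerm_apply_zero_lt_iff :
    (w.trans Fin.revPerm) 0 < (w.trans Fin.revPerm) 1 ↔ ¬w 0 < w 1 := by
  have : w 0 ≠ w 1 := w.injective.ne (by simp)
  simp only [Equiv.trans_apply, Fin.revPerm_apply, Fin.rev_lt_rev, not_lt]
  exact ⟨le_of_lt, fun h => lt_of_le_of_ne h this.symm⟩

end PermAddTwo

theorem aCount_eq_half_sum_gCount (n k : ℕ) (hn : 2 ≤ n) (hk : 1 ≤ k) :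
    2 * aCount n k = gCount n (k - 1) + gCount n k := by
  obtain ⟨m, rfl⟩ := Nat.exists_eq_add_of_le' hn
  exact two_mul_card_eq_card_add_card (Equiv.mulLeft Fin.revPerm) (fun w => w 0 < w 1)
    (runCount (m + 2)) (asLen (m + 2)) trans_revPerm_apply_zero_lt_iff
    (fun w => runCount_trans_revPerm w hn) asLen_eq_runCount_of_lt
    asLen_eq_runCount_add_one_of_not_lt hk
end

section
/- For every permutation w ∈ S_n, as(w) equals the maximal length over all subsequences of w that are alternating, and any permutation with exactly m alternating runs satisfies m ≤ as(w) ≤ m+1. -/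
/-! ### Auxiliary definitions and lemmas -/

/-- ascent-first alternation -/
def IsAlt2 (l : List ℕ) : Prop :=
  ∀ i : ℕ, ∀ hi : i + 1 < l.length,
    if i % 2 = 0 then l.get ⟨i, Nat.lt_of_succ_lt hi⟩ < l.get ⟨i + 1, hi⟩
    else l.get ⟨i + 1, hi⟩ < l.get ⟨i, Nat.lt_of_succ_lt hi⟩

lemma isAlt_nil : IsAlt [] := by intro i hi; simp at hi

lemma isAlt2_pair {a b : ℕ} (h : a < b) : IsAlt2 [a, b] := by
  intro i hi
  simp only [List.length_cons, List.length_nil] at hi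
  have : i = 0 := by omega
  subst this
  simpa

lemma isAlt_pair {a b : ℕ} (h : b < a) : IsAlt [a, b] := by
  intro i hi
  simp only [List.length_cons, List.length_nil] at hi
  have : i = 0 := by omega
  subst this
  simpa

lemma isAlt_cons {x y : ℕ} {v : List ℕ} (h : y < x) (hv : IsAlt2 (y :: v)) :
    IsAlt (x :: y :: v) := by
  intro i hi
  rcases i with _ | j
  · simpa using h
  · have hj : j + 1 < (y :: v).length := by simpa using hi
    have := hv j hj
    have hpar : (j + 1) % 2 = 0 ↔ ¬ (j % 2 = 0) := by omega
    by_cases hp : j % 2 = 0 <;>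
      simp_all [List.get, Nat.succ_mod_two_eq_zero_iff]

lemma isAlt2_cons {x y : ℕ} {v : List ℕ} (h : x < y) (hv : IsAlt (y :: v)) :
    IsAlt2 (x :: y :: v) := by
  intro i hi
  rcases i with _ | j
  · simpa using h
  · have hj : j + 1 < (y :: v).length := by simpa using hi
    have := hv j hj
    by_cases hp : j % 2 = 0 <;>
      simp_all [List.get, Nat.succ_mod_two_eq_zero_iff]

lemma isAlt2_tail {x : ℕ} {v : List ℕ} (hv : IsAlt2 (x :: v)) : IsAlt v := by
  intro i hi
  have hj : (i + 1) + 1 < (x :: v).length := by simpa using Nat.succ_lt_succ hi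
  have := hv (i + 1) hj
  by_cases hp : i % 2 = 0 <;>
    simp_all [List.get, Nat.succ_mod_two_eq_zero_iff]

/-- value at index (via `getElem!`) -/
def sval (l : List ℕ) (i : ℕ) : ℕ := l[i]!

/-- step `i` goes up -/
def upP (l : List ℕ) (i : ℕ) : Prop := sval l i < sval l (i + 1)

/-- turning-point predicate, matching `runCount` -/
def tpred (l : List ℕ) (i : ℕ) : Prop :=
  (l[i]! < l[i+1]! ∧ l[i+2]! < l[i+1]!) ∨ (l[i+1]! < l[i]! ∧ l[i+1]! < l[i+2]!)

instance (l : List ℕ) : DecidablePred (tpred l) := fun _ => by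
  unfold tpred; infer_instance

instance (l : List ℕ) : DecidablePred (upP l) := fun _ => by
  unfold upP; infer_instance

lemma exists_flip (U : ℕ → Prop) : ∀ b a, a ≤ b → ¬ (U a ↔ U b) →
    ∃ t, a ≤ t ∧ t < b ∧ ¬ (U t ↔ U (t + 1)) := by
  intro b
  induction b with
  | zero =>
    intro a ha h
    have : a = 0 := by omega
    subst this; exact absurd Iff.rfl h
  | succ c ih =>
    intro a ha h
    rcases Nat.eq_or_lt_of_le ha with heq | ha'
    · subst heq; exact absurd Iff.rfl h
    · have ha2 : a ≤ c := by omega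
      by_cases hc : U c ↔ U (c + 1)
      · obtain ⟨t, h1, h2, h3⟩ := ih a ha2 (by tauto)
        exact ⟨t, h1, by omega, h3⟩
      · exact ⟨c, ha2, by omega, hc⟩

lemma run_up (l : List ℕ) : ∀ b a, a < b → (∀ t, a ≤ t → t < b → upP l t) →
    sval l a < sval l b := by
  intro b
  induction b with
  | zero => omega
  | succ c ih =>
    intro a hab h
    rcases Nat.eq_or_lt_of_le (Nat.le_of_lt_succ hab) with heq | hlt
    · subst heq; exact h a le_rfl (by omega)
    · exact lt_trans (ih a hlt (fun t h1 h2 => h t h1 (by omega)))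
        (h c (by omega) (by omega))

lemma run_down (l : List ℕ)
    (hinj : ∀ i j, i < l.length → j < l.length → sval l i = sval l j → i = j) :
    ∀ b, b < l.length → ∀ a, a < b → (∀ t, a ≤ t → t < b → ¬ upP l t) →
    sval l b < sval l a := by
  intro b
  induction b with
  | zero => omega
  | succ c ih =>
    intro hc a hab h
    have hstep : sval l (c+1) < sval l c := by
      have h1 := h c (by omega) (by omega)
      have h2 : sval l c ≠ sval l (c+1) := fun he =>
        by have := hinj c (c+1) (by omega) hc he; omega
      unfold upP at h1; omega
    rcases Nat.eq_or_lt_of_le (Nat.le_of_lt_succ hab) with heq | hlt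
    · subst heq; exact hstep
    · exact lt_trans hstep (ih (by omega) a hlt (fun t h1 h2 => h t h1 (by omega)))

lemma tpred_iff (l : List ℕ)
    (hinj : ∀ i j, i < l.length → j < l.length → sval l i = sval l j → i = j)
    (i : ℕ) (h : i + 2 < l.length) :
    tpred l i ↔ ¬ (upP l i ↔ upP l (i + 1)) := by
  have h01 : sval l i ≠ sval l (i+1) := fun he =>
    by have := hinj i (i+1) (by omega) (by omega) he; omega
  have h12 : sval l (i+1) ≠ sval l (i+2) := fun he =>
    by have := hinj (i+1) (i+2) (by omega) (by omega) he; omega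
  unfold tpred upP sval at *
  have : i + 1 + 1 = i + 2 := rfl
  rw [this]
  omega

lemma up_const (l : List ℕ)
    (hinj : ∀ i j, i < l.length → j < l.length → sval l i = sval l j → i = j)
    (a b : ℕ) (hb : b ≤ l.length - 2)
    (hno : ∀ u, a ≤ u → u < b → ¬ tpred l u) :
    ∀ t, a ≤ t → t ≤ b → (upP l t ↔ upP l a) := by
  intro t
  induction t with
  | zero => intro h1 _; have : a = 0 := by omega
            subst this; rfl
  | succ c ih =>
    intro h1 h2
    rcases Nat.eq_or_lt_of_le h1 with heq | hlt
    · rw [← heq]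
    · have hac : a ≤ c := by omega
      have hcb : c < b := by omega
      have hnt := hno c hac hcb
      have hlen : c + 2 < l.length := by
        have : 2 ≤ l.length := by omega
        omega
      rw [tpred_iff l hinj c hlen] at hnt
      push_neg at hnt
      rw [← hnt]
      exact ih hac (by omega)

lemma sub_aux (l : List ℕ) : ∀ (ps : List ℕ) (a : ℕ), ps.Pairwise (· < ·) →
    (∀ x ∈ ps, a ≤ x ∧ x < l.length) →
    (ps.map (fun i => l[i]!)).Sublist (l.drop a) := by
  intro ps
  induction ps with
  | nil => intro a _ _; simp
  | cons p rest ih =>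
    intro a hpw hmem
    obtain ⟨hp1, hp2⟩ := hmem p (by simp)
    have hrest : (rest.map (fun i => l[i]!)).Sublist (l.drop (p+1)) := by
      apply ih (p+1) (List.Pairwise.of_cons hpw)
      intro x hx
      exact ⟨(List.pairwise_cons.mp hpw).1 x hx, (hmem x (by simp [hx])).2⟩
    have hdp : l.drop p = l[p] :: l.drop (p+1) := List.drop_eq_getElem_cons hp2
    have h1 : ((p :: rest).map (fun i => l[i]!)).Sublist (l.drop p) := by
      rw [hdp]
      simp only [List.map_cons]
      rw [getElem!_pos l p hp2]
      exact List.Sublist.cons₂ _ hrest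
    have h2 : (l.drop p).Sublist (l.drop a) := by
      have : l.drop p = (l.drop a).drop (p - a) := by
        rw [List.drop_drop]; congr 1; omega
      rw [this]
      exact List.drop_sublist _ _
    exact h1.trans h2

def cnt (l : List ℕ) (a : ℕ) : ℕ :=
  ((Finset.range (l.length - 2)).filter (fun t => a ≤ t ∧ tpred l t)).card

lemma build_base (l : List ℕ)
    (hinj : ∀ i j, i < l.length → j < l.length → sval l i = sval l j → i = j)
    (h2 : 2 ≤ l.length) (a : ℕ) (ha : a ≤ l.length - 2)
    (hno : ∀ t, a ≤ t → t < l.length - 2 → ¬ tpred l t) :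
    ∃ ps : List ℕ, (a :: ps).Pairwise (· < ·) ∧ (∀ x ∈ a :: ps, x < l.length) ∧
      ps.length = cnt l a + 1 ∧
      (if upP l a then IsAlt2 ((a :: ps).map (sval l))
       else IsAlt ((a :: ps).map (sval l))) := by
  set n := l.length with hn
  have han : a < n - 1 := by omega
  have hcnt : cnt l a = 0 := by
    apply Finset.card_eq_zero.mpr
    apply Finset.filter_eq_empty_iff.mpr
    intro t ht
    rw [Finset.mem_range] at ht
    rintro ⟨hat, htp⟩
    exact hno t hat ht htp
  have hcon := up_const l hinj a (n - 2) le_rfl hno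
  refine ⟨[n - 1], ?_, ?_, by simp [hcnt], ?_⟩
  · simp [han]
  · intro x hx; simp at hx; rcases hx with rfl | rfl <;> omega
  · by_cases hua : upP l a
    · rw [if_pos hua]
      have : sval l a < sval l (n - 1) := by
        apply run_up l (n - 1) a han
        intro t h1 h3
        exact (hcon t h1 (by omega)).mpr hua
      simpa using isAlt2_pair this
    · rw [if_neg hua]
      have : sval l (n - 1) < sval l a := by
        apply run_down l hinj (n - 1) (by omega) a han
        intro t h1 h3 hu
        exact hua ((hcon t h1 (by omega)).mp hu)
      simpa using isAlt_pair this

lemma build (l : List ℕ)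
    (hinj : ∀ i j, i < l.length → j < l.length → sval l i = sval l j → i = j)
    (h2 : 2 ≤ l.length) :
    ∀ k a, l.length - 2 - a ≤ k → a ≤ l.length - 2 →
    ∃ ps : List ℕ, (a :: ps).Pairwise (· < ·) ∧ (∀ x ∈ a :: ps, x < l.length) ∧
      ps.length = cnt l a + 1 ∧
      (if upP l a then IsAlt2 ((a :: ps).map (sval l))
       else IsAlt ((a :: ps).map (sval l))) := by
  intro k
  induction k with
  | zero =>
    intro a hk ha
    exact build_base l hinj h2 a ha (fun t h1 h3 _ => by omega)
  | succ k ih =>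
    intro a hk ha
    set n := l.length with hn
    set F := (Finset.range (n - 2)).filter (fun t => a ≤ t ∧ tpred l t) with hF
    by_cases hFne : F.Nonempty
    case neg =>
      refine build_base l hinj h2 a ha (fun t h1 h3 htp => hFne ⟨t, ?_⟩)
      rw [hF, Finset.mem_filter, Finset.mem_range]
      exact ⟨h3, h1, htp⟩
    case pos =>
      set t0 := F.min' hFne with ht0def
      have hmem0 := Finset.mem_filter.mp (F.min'_mem hFne)
      have ht0r : t0 < n - 2 := Finset.mem_range.mp hmem0.1
      obtain ⟨hat0, htp0⟩ := hmem0.2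
      have hmin : ∀ u, a ≤ u → u < t0 → ¬ tpred l u := by
        intro u h1 h3 htp
        have : t0 ≤ u := by
          apply F.min'_le
          rw [hF, Finset.mem_filter, Finset.mem_range]
          exact ⟨by omega, h1, htp⟩
        omega
      have hcnt : cnt l a = cnt l (t0 + 1) + 1 := by
        have hFeq : F = insert t0
            ((Finset.range (n - 2)).filter (fun t => t0 + 1 ≤ t ∧ tpred l t)) := by
          ext x
          rw [hF]
          simp only [Finset.mem_filter, Finset.mem_range, Finset.mem_insert]
          constructor
          · rintro ⟨hx1, hx2, hx3⟩
            by_cases hxt : x < t0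
            · exact absurd hx3 (hmin x hx2 hxt)
            · rcases Nat.eq_or_lt_of_le (Nat.not_lt.mp hxt) with heq | hlt
              · exact Or.inl heq.symm
              · exact Or.inr ⟨hx1, by omega, hx3⟩
          · rintro (rfl | ⟨hx1, hx2, hx3⟩)
            · exact ⟨ht0r, hat0, htp0⟩
            · exact ⟨hx1, by omega, hx3⟩
        have hnm : t0 ∉ (Finset.range (n - 2)).filter
            (fun t => t0 + 1 ≤ t ∧ tpred l t) := by
          simp only [Finset.mem_filter, Finset.mem_range]
          rintro ⟨_, h, _⟩; omega
        unfold cnt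
        rw [← hn, ← hF, hFeq, Finset.card_insert_of_notMem hnm]
      obtain ⟨ps', hpw', hmem', hlen', hdir'⟩ :=
        ih (t0 + 1) (by omega) (by omega)
      have hcon := up_const l hinj a t0 (by omega) hmin
      have hflip : ¬ (upP l t0 ↔ upP l (t0 + 1)) :=
        (tpred_iff l hinj t0 (by omega)).mp htp0
      have hup0 : upP l t0 ↔ upP l a := hcon t0 hat0 le_rfl
      refine ⟨(t0 + 1) :: ps', ?_, ?_, by simp [hlen', hcnt], ?_⟩
      · rw [List.pairwise_cons]
        refine ⟨?_, hpw'⟩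
        intro x hx
        rcases List.mem_cons.mp hx with rfl | hx'
        · omega
        · have := (List.pairwise_cons.mp hpw').1 x hx'
          omega
      · intro x hx
        rcases List.mem_cons.mp hx with rfl | hx'
        · omega
        · exact hmem' x hx'
      · by_cases hua : upP l a
        · rw [if_pos hua]
          have hav : sval l a < sval l (t0 + 1) := by
            apply run_up l (t0 + 1) a (by omega)
            intro t h1 h3
            exact (hcon t h1 (by omega)).mpr hua
          have hdn : ¬ upP l (t0 + 1) := by tauto
          rw [if_neg hdn] at hdir'
          simp only [List.map_cons] at hdir' ⊢
          exact isAlt2_cons hav hdir'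
        · rw [if_neg hua]
          have hav : sval l (t0 + 1) < sval l a := by
            apply run_down l hinj (t0 + 1) (by omega) a (by omega)
            intro t h1 h3 hu
            exact hua ((hcon t h1 (by omega)).mp hu)
          have hdn : upP l (t0 + 1) := by tauto
          rw [if_pos hdn] at hdir'
          simp only [List.map_cons] at hdir' ⊢
          exact isAlt_cons hav hdir'

lemma upper (l : List ℕ)
    (hinj : ∀ i j, i < l.length → j < l.length → sval l i = sval l j → i = j)
    (l' : List ℕ) (hs : l'.Sublist l) (halt : IsAlt l') :
    l'.length ≤ ((Finset.range (l.length - 2)).filter (tpred l)).card + 2 := by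
  set n := l.length with hn
  set k := l'.length with hk
  by_cases hk2 : k ≤ 2
  · omega
  push_neg at hk2
  obtain ⟨f, hf⟩ := List.sublist_iff_exists_fin_orderEmbedding_get_eq.mp hs
  set P : ℕ → ℕ := fun j => if h : j < k then (f ⟨j, h⟩ : ℕ) else n with hP
  have hPlt : ∀ j, j < k → P j < n := by
    intro j h
    simp only [hP, dif_pos h]
    exact (f ⟨j, h⟩).2
  have hPmono : ∀ j j', j < j' → j' < k → P j < P j' := by
    intro j j' h h'
    simp only [hP, dif_pos h', dif_pos (h.trans h')]
    exact f.strictMono (by exact Fin.mk_lt_mk.mpr h)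
  have hsv : ∀ j (h : j < k), sval l (P j) = l'.get ⟨j, h⟩ := by
    intro j h
    simp only [hP, dif_pos h, sval]
    rw [getElem!_pos l _ (f ⟨j, h⟩).2, hf ⟨j, h⟩]
    rfl
  have halt' : ∀ j, j + 1 < k →
      (j % 2 = 0 → sval l (P (j + 1)) < sval l (P j)) ∧
      (j % 2 ≠ 0 → sval l (P j) < sval l (P (j + 1))) := by
    intro j hj
    have := halt j hj
    rw [hsv j (by omega), hsv (j + 1) hj]
    by_cases hp : j % 2 = 0
    · rw [if_pos hp] at this
      exact ⟨fun _ => this, fun h => absurd hp h⟩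
    · rw [if_neg hp] at this
      exact ⟨fun h => absurd h hp, fun _ => this⟩
  have hstep : ∀ j, j + 1 < k →
      ∃ t, P j ≤ t ∧ t < P (j + 1) ∧ (upP l t ↔ j % 2 = 1) := by
    intro j hj
    by_cases hp : j % 2 = 0
    · have : ∃ t, P j ≤ t ∧ t < P (j + 1) ∧ ¬ upP l t := by
        by_contra h'
        push_neg at h'
        have := run_up l (P (j + 1)) (P j) (hPmono j (j + 1) (by omega) hj) h'
        have h2 := (halt' j hj).1 hp
        omega
      obtain ⟨t, h1, h2, h3⟩ := this
      exact ⟨t, h1, h2, ⟨fun hu => absurd hu h3, fun hh => by omega⟩⟩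
    · have : ∃ t, P j ≤ t ∧ t < P (j + 1) ∧ upP l t := by
        by_contra h'
        push_neg at h'
        have := run_down l hinj (P (j + 1)) (hPlt (j + 1) hj) (P j)
          (hPmono j (j + 1) (by omega) hj) h'
        have h2 := (halt' j hj).2 hp
        omega
      obtain ⟨t, h1, h2, h3⟩ := this
      exact ⟨t, h1, h2, ⟨fun _ => by omega, fun _ => h3⟩⟩
  set ifun : ℕ → ℕ := fun j =>
    if h : j + 1 < k then (hstep j h).choose else 0 with hifun
  have ispec : ∀ j (h : j + 1 < k), P j ≤ ifun j ∧ ifun j < P (j + 1) ∧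
      (upP l (ifun j) ↔ j % 2 = 1) := by
    intro j h
    simp only [hifun, dif_pos h]
    exact (hstep j h).choose_spec
  have hflip : ∀ j, j + 2 < k →
      ∃ t, ifun j ≤ t ∧ t < ifun (j + 1) ∧ ¬ (upP l t ↔ upP l (t + 1)) := by
    intro j hj
    have h1 := ispec j (by omega)
    have h2 := ispec (j + 1) hj
    apply exists_flip (upP l) (ifun (j + 1)) (ifun j)
    · omega
    · have hpar : ¬ (j % 2 = 1 ↔ (j + 1) % 2 = 1) := by omega
      tauto
  set tfun : ℕ → ℕ := fun j =>
    if h : j + 2 < k then (hflip j h).choose else 0 with htfun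
  have tspec : ∀ j (h : j + 2 < k), ifun j ≤ tfun j ∧ tfun j < ifun (j + 1) ∧
      ¬ (upP l (tfun j) ↔ upP l (tfun j + 1)) := by
    intro j h
    simp only [htfun, dif_pos h]
    exact (hflip j h).choose_spec
  have hmono : ∀ j j', j + 1 ≤ j' → j' + 2 < k → tfun j < tfun j' := by
    intro j j' hj'
    induction j', hj' using Nat.le_induction with
    | base =>
      intro hk'
      have h1 := tspec j (by omega)
      have h2 := tspec (j + 1) hk'
      have h3 := ispec (j + 1) (by omega)
      omega
    | succ m hm ih =>
      intro hk'
      have h1 := ih (by omega)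
      have h2 := tspec m (by omega)
      have h3 := tspec (m + 1) hk'
      have h4 := ispec (m + 1) (by omega)
      omega
  have hmem : ∀ j ∈ Finset.range (k - 2),
      tfun j ∈ (Finset.range (n - 2)).filter (tpred l) := by
    intro j hj
    rw [Finset.mem_range] at hj
    have hjk : j + 2 < k := by omega
    have h1 := tspec j hjk
    have h2 := ispec (j + 1) hjk
    rw [show j + 1 + 1 = j + 2 from rfl] at h2
    have h3 := hPlt (j + 2) hjk
    have hb : tfun j + 2 < n := by omega
    rw [Finset.mem_filter, Finset.mem_range]
    exact ⟨by omega, (tpred_iff l hinj (tfun j) hb).mpr h1.2.2⟩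
  have hinjOn : Set.InjOn tfun (Finset.range (k - 2)) := by
    intro a ha b hb hab
    rw [Finset.coe_range, Set.mem_Iio] at ha hb
    rcases lt_trichotomy a b with h | h | h
    · have := hmono a b (by omega) (by omega); omega
    · exact h
    · have := hmono b a (by omega) (by omega); omega
  have := Finset.card_le_card_of_injOn tfun hmem hinjOn
  rw [Finset.card_range] at this
  omega

lemma permList_length (n : ℕ) (w : Equiv.Perm (Fin n)) :
    (permList n w).length = n := by
  simp [permList]

lemma permList_sval (n : ℕ) (w : Equiv.Perm (Fin n)) (i : ℕ) (h : i < n) :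
    sval (permList n w) i = (w ⟨i, h⟩ : ℕ) := by
  unfold sval permList
  rw [getElem!_pos _ _ (by simpa using h)]
  simp

lemma permList_inj (n : ℕ) (w : Equiv.Perm (Fin n)) :
    ∀ i j, i < (permList n w).length → j < (permList n w).length →
      sval (permList n w) i = sval (permList n w) j → i = j := by
  intro i j hi hj he
  rw [permList_length] at hi hj
  rw [permList_sval n w i hi, permList_sval n w j hj] at he
  have := w.injective (Fin.val_injective he)
  exact congrArg Fin.val this

lemma runCount_eq (n : ℕ) (w : Equiv.Perm (Fin n)) (h : ¬ n ≤ 1) :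
    runCount n w =
      ((Finset.range (n - 2)).filter (tpred (permList n w))).card + 1 := by
  rw [runCount]
  simp only [if_neg h]
  rw [Nat.add_comm]
  congr 1

theorem asLen_spec_and_runs (n : ℕ) (w : Equiv.Perm (Fin n)) :
    asLen n w =
      sSup {k | ∃ l : List ℕ, l.Sublist (permList n w) ∧ IsAlt l ∧
        l.length = k} ∧
    runCount n w ≤ asLen n w ∧ asLen n w ≤ runCount n w + 1 := by
  have hlen := permList_length n w
  have hinj := permList_inj n w
  set l : List ℕ := permList n w with hl
  set S : Set ℕ :=
    {k | ∃ l' : List ℕ, l'.Sublist l ∧ IsAlt l' ∧ l'.length = k} with hS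
  have hbdd : BddAbove S := by
    refine ⟨n, fun k hk => ?_⟩
    obtain ⟨l', h1, _, h3⟩ := hk
    rw [← h3, ← hlen]
    exact h1.length_le
  have hSne : S.Nonempty := ⟨0, [], List.nil_sublist _, isAlt_nil, rfl⟩
  have haslen : asLen n w = sSup S := rfl
  refine ⟨rfl, ?_, ?_⟩
  · -- lower bound
    by_cases hn1 : n ≤ 1
    · rw [runCount, if_pos hn1]
      rcases Nat.lt_or_ge n 1 with h0 | h1
      · have : n = 0 := by omega
        exact this.le.trans (Nat.zero_le _)
      · have hn : n = 1 := by omega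
        have h1S : (1 : ℕ) ∈ S := by
          refine ⟨l, List.Sublist.refl l, ?_, by omega⟩
          intro i hi
          rw [hlen, hn] at hi
          omega
        have := le_csSup hbdd h1S
        rw [haslen]
        omega
    · have h2 : 2 ≤ l.length := by omega
      obtain ⟨ps, hpw, hmem, hlenps, hdir⟩ :=
        build l hinj h2 l.length 0 (by omega) (by omega)
      have hcnt0 : cnt l 0 =
          ((Finset.range (n - 2)).filter (tpred l)).card := by
        unfold cnt
        rw [hlen]
        congr 1
        apply Finset.filter_congr
        intro x _
        simp
      have hrun := runCount_eq n w hn1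
      rw [← hl] at hrun
      rw [haslen]
      by_cases hup : upP l 0
      · rw [if_pos hup] at hdir
        have htail : IsAlt (ps.map (sval l)) := by
          rw [List.map_cons] at hdir
          exact isAlt2_tail hdir
        have hsub : (ps.map (sval l)).Sublist l := by
          have := sub_aux l ps 0 (List.Pairwise.of_cons hpw)
            (fun x hx => ⟨Nat.zero_le x, hmem x (List.mem_cons_of_mem _ hx)⟩)
          rw [List.drop_zero] at this
          exact this
        have hmemS : ps.length ∈ S :=
          ⟨ps.map (sval l), hsub, htail, by simp⟩
        have := le_csSup hbdd hmemS
        omega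
      · rw [if_neg hup] at hdir
        have hsub : ((0 :: ps).map (sval l)).Sublist l := by
          have := sub_aux l (0 :: ps) 0 hpw
            (fun x hx => ⟨Nat.zero_le x, hmem x hx⟩)
          rw [List.drop_zero] at this
          exact this
        have hmemS : (0 :: ps).length ∈ S :=
          ⟨(0 :: ps).map (sval l), hsub, hdir, by simp⟩
        have := le_csSup hbdd hmemS
        simp only [List.length_cons] at this
        omega
  · -- upper bound
    rw [haslen]
    apply csSup_le hSne
    intro k hk
    obtain ⟨l', hsub, halt, hlen'⟩ := hk
    by_cases hn1 : n ≤ 1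
    · rw [runCount, if_pos hn1]
      have := hsub.length_le
      omega
    · have := upper l hinj l' hsub halt
      rw [hlen] at this
      rw [runCount_eq n w hn1, ← hl]
      omega
end
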